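/- arXiv:2102.02742 — 3 statements merged into one kernel-verified Lean document; each statement's English description precedes it below -/
import Mathlib

section
/- Let w : (0,1) → ℝ be a nonnegative increasing function with w(0)=0. Suppose there is a constant C₁ such that ∫₀ᵘ w(ξ)/ξ dξ ≤ C₁·w(u) for all 0 < u < 1 (Dini condition of order 1), and a constant C₂ such that for some positive integer n, ∫ᵤ¹ w(ξ)/ξ^(n+1) dξ ≤ C₂·w(u)/uⁿ for all 0 < u < 1 (condition B_n). Then w satisfies a doubling-type condition: there exists a constant C such that ∫₀^(2u) w(ξ)/ξ dξ ≤ C·w(u) for all u with 0 < 2u ≤ 1. -/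
/-!
Split `(0, 2u)` at `u`. The Dini condition bounds the integral over `(0, u)` by `C₁ w(u)`. On
`(u, 2u)` we have `w(ξ)/ξ ≤ (2u)ⁿ w(ξ)/ξⁿ⁺¹`, so condition `B_n` bounds the integral over `(u, 2u)`
by `(2u)ⁿ C₂ w(u)/uⁿ = 2ⁿ C₂ w(u)`.
-/

open MeasureTheory Set

theorem MonotoneOn.integrableOn_Icc_div_pow {w : ℝ → ℝ} {a b : ℝ} (hw : MonotoneOn w (Icc a b))
    (ha : 0 < a) (k : ℕ) : IntegrableOn (fun x => w x / x ^ k) (Icc a b) := by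
  simp_rw [div_eq_mul_inv]
  refine (hw.integrableOn_isCompact isCompact_Icc).mul_continuousOn ?_ isCompact_Icc
  exact (continuousOn_pow k).inv₀ fun x hx => pow_ne_zero k (ha.trans_le hx.1).ne'

theorem setIntegral_Ioo_add_Ioo {f : ℝ → ℝ} {a b c : ℝ} (hab : a ≤ b) (hbc : b ≤ c)
    (hf : IntegrableOn f (Ioo a c)) :
    ∫ x in Ioo a c, f x = (∫ x in Ioo a b, f x) + ∫ x in Ioo b c, f x := by
  have hf' : IntegrableOn f (Ioc a c) :=
    (integrableOn_Ioc_iff_integrableOn_Ioo (by finiteness)).2 hf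
  simp only [← integral_Ioc_eq_integral_Ioo]
  rw [← Ioc_union_Ioc_eq_Ioc hab hbc, setIntegral_union (Ioc_disjoint_Ioc_of_le le_rfl)
    measurableSet_Ioc (hf'.mono_set (Ioc_subset_Ioc_right hbc))
    (hf'.mono_set (Ioc_subset_Ioc_left hab))]

theorem setIntegral_Ioo_div_le_pow_mul_setIntegral_div_pow {w : ℝ → ℝ} {u v b : ℝ} (n : ℕ)
    (hu : 0 < u) (hv : 0 ≤ v) (hvb : v ≤ b) (hw : ∀ x ∈ Ioo u b, 0 ≤ w x)
    (hint : IntegrableOn (fun x => w x / x ^ (n + 1)) (Ioo u b)) :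
    ∫ x in Ioo u v, w x / x ≤ v ^ n * ∫ x in Ioo u b, w x / x ^ (n + 1) := by
  have hwv : ∀ x ∈ Ioo u v, 0 ≤ w x := fun x hx => hw x ⟨hx.1, hx.2.trans_le hvb⟩
  have hpointwise : ∀ x ∈ Ioo u v, w x / x ≤ v ^ n * (w x / x ^ (n + 1)) := fun x hx => by
    have hx0 : 0 < x := hu.trans hx.1
    calc w x / x = x ^ n * (w x / x ^ (n + 1)) := by field_simp; ring
      _ ≤ v ^ n * (w x / x ^ (n + 1)) := by
        gcongr
        · exact div_nonneg (hwv x hx) (by positivity)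
        · exact hx.2.le
  calc ∫ x in Ioo u v, w x / x ≤ ∫ x in Ioo u v, v ^ n * (w x / x ^ (n + 1)) := by
        refine integral_mono_of_nonneg ?_ ((hint.mono_set (Ioo_subset_Ioo_right hvb)).const_mul _)
          (ae_restrict_of_forall_mem measurableSet_Ioo hpointwise)
        exact ae_restrict_of_forall_mem measurableSet_Ioo fun x hx =>
          div_nonneg (hwv x hx) (hu.trans hx.1).le
    _ = v ^ n * ∫ x in Ioo u v, w x / x ^ (n + 1) := integral_const_mul _ _
    _ ≤ v ^ n * ∫ x in Ioo u b, w x / x ^ (n + 1) := by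
        refine mul_le_mul_of_nonneg_left ?_ (pow_nonneg hv n)
        refine setIntegral_mono_set hint ?_ (Ioo_subset_Ioo_right hvb).eventuallyLE
        exact ae_restrict_of_forall_mem measurableSet_Ioo fun x hx =>
          div_nonneg (hw x hx) (pow_pos (hu.trans hx.1) _).le

theorem stmt_0_general (w : ℝ → ℝ) (n : ℕ) (C₁ C₂ : ℝ)
    (hpos : ∀ u ∈ Set.Ioo (0:ℝ) 1, 0 ≤ w u)
    (hmono : MonotoneOn w (Set.Icc (0:ℝ) 1))
    (hDini : ∀ u : ℝ, 0 < u → u < 1 → ∫ ξ in Set.Ioo (0:ℝ) u, w ξ / ξ ≤ C₁ * w u)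
    (hBn : ∀ u : ℝ, 0 < u → u < 1 →
      ∫ ξ in Set.Ioo u (1:ℝ), w ξ / ξ ^ (n + 1) ≤ C₂ * w u / u ^ n) :
    ∃ C : ℝ, ∀ u : ℝ, 0 < u → 2 * u ≤ 1 →
      ∫ ξ in Set.Ioo (0:ℝ) (2 * u), w ξ / ξ ≤ C * w u := by
  refine ⟨max (C₁ + 2 ^ n * C₂) 0, fun u hu hu2 => ?_⟩
  have hu1 : u < 1 := by linarith
  have hwu : 0 ≤ w u := hpos u ⟨hu, hu1⟩
  by_cases hint : IntegrableOn (fun ξ => w ξ / ξ) (Ioo 0 (2 * u))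
  swap
  · rw [integral_undef hint]
    exact mul_nonneg (le_max_right _ _) hwu
  have hBn_int : IntegrableOn (fun ξ => w ξ / ξ ^ (n + 1)) (Ioo u 1) :=
    ((hmono.mono (Icc_subset_Icc_left hu.le)).integrableOn_Icc_div_pow hu (n + 1)).mono_set
      Ioo_subset_Icc_self
  have hmiddle : ∫ ξ in Ioo u (2 * u), w ξ / ξ ≤ 2 ^ n * C₂ * w u :=
    calc ∫ ξ in Ioo u (2 * u), w ξ / ξ ≤ (2 * u) ^ n * ∫ ξ in Ioo u 1, w ξ / ξ ^ (n + 1) :=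
          setIntegral_Ioo_div_le_pow_mul_setIntegral_div_pow n hu (by positivity) hu2
            (fun ξ hξ => hpos ξ ⟨hu.trans hξ.1, hξ.2⟩) hBn_int
      _ ≤ (2 * u) ^ n * (C₂ * w u / u ^ n) := by gcongr; exact hBn u hu hu1
      _ = 2 ^ n * C₂ * w u := by field_simp; ring
  calc ∫ ξ in Ioo 0 (2 * u), w ξ / ξ
      = (∫ ξ in Ioo 0 u, w ξ / ξ) + ∫ ξ in Ioo u (2 * u), w ξ / ξ :=
        setIntegral_Ioo_add_Ioo hu.le (by linarith) hint
    _ ≤ (C₁ + 2 ^ n * C₂) * w u := by linarith [hDini u hu hu1]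
    _ ≤ max (C₁ + 2 ^ n * C₂) 0 * w u := by gcongr; exact le_max_left _ _

theorem stmt_0 (w : ℝ → ℝ) (n : ℕ) (hn : 0 < n) (C₁ C₂ : ℝ)
    (hpos : ∀ u ∈ Set.Ioo (0:ℝ) 1, 0 ≤ w u)
    (hmono : MonotoneOn w (Set.Icc (0:ℝ) 1))
    (hzero : w 0 = 0)
    (hDini : ∀ u : ℝ, 0 < u → u < 1 → ∫ ξ in Set.Ioo (0:ℝ) u, w ξ / ξ ≤ C₁ * w u)
    (hBn : ∀ u : ℝ, 0 < u → u < 1 →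
      ∫ ξ in Set.Ioo u (1:ℝ), w ξ / ξ ^ (n + 1) ≤ C₂ * w u / u ^ n) :
    ∃ C : ℝ, ∀ u : ℝ, 0 < u → 2 * u ≤ 1 →
      ∫ ξ in Set.Ioo (0:ℝ) (2 * u), w ξ / ξ ≤ C * w u :=
  stmt_0_general w n C₁ C₂ hpos hmono hDini hBn
end

section
/- Let a ∈ ℝ, 0 < h, and z ∈ ℂ with |z| < 1 and |e^{ia} − z| > 2h. Then |(z − e^{i(a−h)})(z − e^{i(a+h)})(e^{ia} − z)| ≥ (3/4)·|e^{ia} − z|³ ≥ 6h³. -/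
open Complex

/-! Writing `e = exp (a I)`, the product of the first two factors equals
`(e - z)² + 2 e z (1 - cos h)`, and the second term has norm at most `h²` because `|z| < 1`
and `1 - cos h ≤ h² / 2`. Since `h < |e - z| / 2`, the product therefore has norm at least
`|e - z|² - h² ≥ (3/4) |e - z|²`. -/

theorem sub_exp_sub_mul_sub_exp_add (a h z : ℂ) :
    (z - exp ((a - h) * I)) * (z - exp ((a + h) * I)) =
      (exp (a * I) - z) ^ 2 + 2 * exp (a * I) * z * (1 - cos h) := by
  have hinv : exp (h * I) * exp (-h * I) = 1 := by rw [← exp_add]; simp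
  have hsub : exp ((a - h) * I) = exp (a * I) * exp (-h * I) := by rw [← exp_add]; ring_nf
  have hadd : exp ((a + h) * I) = exp (a * I) * exp (h * I) := by rw [← exp_add]; ring_nf
  rw [cos, hsub, hadd]
  linear_combination (exp (a * I) ^ 2) * hinv

theorem norm_two_mul_exp_mul_one_sub_cos_le (a h : ℝ) {z : ℂ} (hz : ‖z‖ ≤ 1) :
    ‖2 * exp (a * I) * z * (1 - cos h)‖ ≤ h ^ 2 := by
  have hcos : 1 - Real.cos h ≤ h ^ 2 / 2 := by linarith [Real.one_sub_sq_div_two_le_cos (x := h)]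
  rw [← ofReal_cos, ← ofReal_one, ← ofReal_sub, norm_mul, norm_mul, norm_mul, norm_exp_ofReal_mul_I,
    norm_real, Real.norm_of_nonneg (by linarith [Real.cos_le_one h]), Complex.norm_two]
  nlinarith [norm_nonneg z, Real.cos_le_one h]

theorem norm_exp_sub_sq_sub_sq_le (a h : ℝ) {z : ℂ} (hz : ‖z‖ ≤ 1) :
    ‖exp (a * I) - z‖ ^ 2 - h ^ 2 ≤
      ‖(z - exp ((a - h) * I)) * (z - exp ((a + h) * I))‖ := by
  have htri := norm_sub_norm_le ((exp (a * I) - z) ^ 2) (-(2 * exp (a * I) * z * (1 - cos h)))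
  rw [sub_neg_eq_add, norm_neg, norm_pow] at htri
  rw [sub_exp_sub_mul_sub_exp_add]
  linarith [norm_two_mul_exp_mul_one_sub_cos_le a h hz]

theorem stmt_4 (a h : ℝ) (hh : 0 < h) (z : ℂ) (hz : ‖z‖ < 1)
    (hd : 2 * h < ‖(Complex.exp (a * Complex.I) - z)‖) :
    (3 / 4) * ‖(Complex.exp (a * Complex.I) - z)‖ ^ 3 ≤
      ‖((z - Complex.exp ((a - h) * Complex.I)) *
        (z - Complex.exp ((a + h) * Complex.I)) *
        (Complex.exp (a * Complex.I) - z))‖ ∧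
    6 * h ^ 3 ≤ (3 / 4) * ‖(Complex.exp (a * Complex.I) - z)‖ ^ 3 := by
  set d := ‖exp (a * I) - z‖
  have hquad := norm_exp_sub_sq_sub_sq_le a h hz.le
  have hd0 : 0 ≤ d := norm_nonneg _
  have hd2h : 0 < d - 2 * h := by linarith
  refine ⟨?_, by nlinarith [mul_pos hd2h (by positivity : 0 < d ^ 2 + 2 * d * h + 4 * h ^ 2)]⟩
  rw [norm_mul]
  calc 3 / 4 * d ^ 3 ≤ (d ^ 2 - h ^ 2) * d := by
        nlinarith [mul_nonneg hd0 (mul_pos hd2h (by positivity : 0 < d + 2 * h)).le]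
    _ ≤ _ := mul_le_mul_of_nonneg_right hquad hd0
end

section
/- Let a ∈ ℝ, 0 < h ≤ 1, and z ∈ ℂ with |z| < 1 and |e^{ia} − z| > 2h. Then |K₁(a,h,z)| ≤ (8/3)·h²/|e^{ia} − z|³ ≤ 1/(3h), where K₁(a,h,z) = (1/i)·[1/(z − e^{i(a−h)}) + 1/(z − e^{i(a+h)}) + 2/(e^{ia} − z)]. -/
open Complex

/-! The kernel is a second difference: with `u = e^{i(a-h)}`, `v = e^{i(a+h)}` and `e = e^{ia}` we
have `uv = e²`, and the defect `s = 2e - (u + v) = 2e(1 - cos h)` has size at most `h²`. Clearing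
denominators turns the kernel into `s (z + e) / ((z - u)(z - v)(e - z))`, and
`(z - u)(z - v) = (z - e)² + s z` is at least `(3/4)|e - z|²` once `|e - z| > 2h`. -/

section Field

variable {K : Type*} [Field K] {u v e z : K}

theorem sub_mul_sub_eq_sq_add (huv : u * v = e ^ 2) :
    (z - u) * (z - v) = (z - e) ^ 2 + (2 * e - (u + v)) * z := by
  linear_combination huv

theorem one_div_sub_add_one_div_sub_add_two_div (huv : u * v = e ^ 2) (hu : z - u ≠ 0)
    (hv : z - v ≠ 0) (he : e - z ≠ 0) :
    1 / (z - u) + 1 / (z - v) + 2 / (e - z) =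
      (2 * e - (u + v)) * (z + e) / ((z - u) * (z - v) * (e - z)) := by
  field_simp
  linear_combination 2 * huv

end Field

theorem norm_one_div_sub_add_one_div_sub_add_two_div_le {K : Type*} [NormedField K]
    {u v e z : K} (huv : u * v = e ^ 2) (he : ‖e‖ = 1) (hz : ‖z‖ ≤ 1)
    (hs : 4 * ‖2 * e - (u + v)‖ < ‖e - z‖ ^ 2) :
    ‖1 / (z - u) + 1 / (z - v) + 2 / (e - z)‖ ≤
      8 / 3 * ‖2 * e - (u + v)‖ / ‖e - z‖ ^ 3 := by
  set s := 2 * e - (u + v)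
  set d := ‖e - z‖
  have hd : 0 < d := by nlinarith [norm_nonneg s, norm_nonneg (e - z)]
  have hprod : 3 / 4 * d ^ 2 ≤ ‖(z - u) * (z - v)‖ :=
    calc 3 / 4 * d ^ 2 ≤ d ^ 2 - ‖s‖ * 1 := by linarith
      _ ≤ ‖(z - e) ^ 2‖ - ‖s‖ * ‖z‖ := by rw [norm_pow, norm_sub_rev z e]; gcongr
      _ ≤ ‖(z - u) * (z - v)‖ := by
        rw [sub_mul_sub_eq_sq_add huv, ← norm_mul]
        exact norm_sub_le_norm_add _ _
  have hprod0 : (z - u) * (z - v) ≠ 0 := norm_pos_iff.mp ((by positivity : (0:ℝ) < 3 / 4 * d ^ 2).trans_le hprod)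
  have hsum : ‖z + e‖ ≤ 2 := (norm_add_le z e).trans (by linarith)
  calc ‖1 / (z - u) + 1 / (z - v) + 2 / (e - z)‖
      = ‖s‖ * ‖z + e‖ / (‖(z - u) * (z - v)‖ * d) := by
        rw [one_div_sub_add_one_div_sub_add_two_div huv (left_ne_zero_of_mul hprod0)
          (right_ne_zero_of_mul hprod0) (norm_pos_iff.mp hd), norm_div, norm_mul, norm_mul]
    _ ≤ ‖s‖ * 2 / (3 / 4 * d ^ 2 * d) := by gcongr
    _ = 8 / 3 * ‖s‖ / d ^ 3 := by field_simp; ring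

theorem exp_sub_mul_I_mul_exp_add_mul_I (a h : ℝ) :
    exp ((a - h) * I) * exp ((a + h) * I) = exp (a * I) ^ 2 := by
  rw [← exp_add, sq, ← exp_add]
  ring_nf

theorem norm_two_mul_exp_mul_I_sub_le (a h : ℝ) :
    ‖2 * exp (a * I) - (exp ((a - h) * I) + exp ((a + h) * I))‖ ≤ h ^ 2 := by
  have hcos : 2 * exp (a * I) - (exp ((a - h) * I) + exp ((a + h) * I)) =
      2 * exp (a * I) * ((1 - Real.cos h : ℝ) : ℂ) := by
    push_cast
    rw [Complex.cos, sub_mul, add_mul, exp_sub, exp_add, neg_mul, exp_neg]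
    field_simp
    ring
  rw [hcos, norm_mul, norm_mul, norm_exp_ofReal_mul_I, Complex.norm_real, Real.norm_eq_abs,
    abs_of_nonneg (by linarith [Real.cos_le_one h])]
  norm_num
  linarith [Real.one_sub_sq_div_two_le_cos (x := h)]

theorem stmt_5_general (a h : ℝ) (hh : 0 < h) (z : ℂ) (hz : ‖z‖ < 1)
    (hd : 2 * h < ‖Complex.exp (a * Complex.I) - z‖) :
    ‖(1 / Complex.I) *
        (1 / (z - Complex.exp ((a - h) * Complex.I)) +
         1 / (z - Complex.exp ((a + h) * Complex.I)) +
         2 / (Complex.exp (a * Complex.I) - z))‖ ≤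
      (8 / 3) * h ^ 2 / ‖Complex.exp (a * Complex.I) - z‖ ^ 3 ∧
    (8 / 3) * h ^ 2 / ‖Complex.exp (a * Complex.I) - z‖ ^ 3 ≤ 1 / (3 * h) := by
  set d := ‖exp (a * I) - z‖
  have hs := norm_two_mul_exp_mul_I_sub_le a h
  have hd0 : 0 < d := by linarith
  have hsq : (2 * h) ^ 2 < d ^ 2 := by gcongr
  refine ⟨?_, ?_⟩
  · rw [norm_mul, norm_div, norm_one, norm_I, div_one, one_mul]
    calc _ ≤ 8 / 3 * ‖2 * exp (a * I) - (exp ((a - h) * I) + exp ((a + h) * I))‖ / d ^ 3 :=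
          norm_one_div_sub_add_one_div_sub_add_two_div_le
            (exp_sub_mul_I_mul_exp_add_mul_I a h) (norm_exp_ofReal_mul_I a) hz.le (by linarith)
      _ ≤ 8 / 3 * h ^ 2 / d ^ 3 := by gcongr
  · have hcube : (2 * h) ^ 3 ≤ d ^ 3 := by gcongr
    rw [div_le_div_iff₀ (by positivity) (by positivity)]
    linarith

theorem stmt_5 (a h : ℝ) (hh : 0 < h) (hh1 : h ≤ 1) (z : ℂ) (hz : ‖z‖ < 1)
    (hd : 2 * h < ‖Complex.exp (a * Complex.I) - z‖) :
    ‖(1 / Complex.I) *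
        (1 / (z - Complex.exp ((a - h) * Complex.I)) +
         1 / (z - Complex.exp ((a + h) * Complex.I)) +
         2 / (Complex.exp (a * Complex.I) - z))‖ ≤
      (8 / 3) * h ^ 2 / ‖Complex.exp (a * Complex.I) - z‖ ^ 3 ∧
    (8 / 3) * h ^ 2 / ‖Complex.exp (a * Complex.I) - z‖ ^ 3 ≤ 1 / (3 * h) :=
  stmt_5_general a h hh z hz hd
end
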